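/- arXiv:1207.0696 — 2 statements merged into one kernel-verified Lean document; each statement's English description precedes it below -/
import Mathlib

section
/- If a function F : ℝ[[X]] → ℝ[[X]] is NS*-continuous (i.e., for all x₁, x₂, it is never the case that |x₂ − x₁| ≪ |F(x₂) − F(x₁)|, where a ≪ b means k·|a| < |b| for all naturals k), then F is continuous in the order topology of the lexicographically ordered ring ℝ[[X]]: for every x₀ and every ε > 0 there exists η > 0 such that |x − x₀| < η implies |F(x) − F(x₀)| < ε. -/
open PowerSeries

attribute [local instance] Classical.propDecidable

/-- `z` is positive for the lexicographic order on `ℝ[[X]]`. -/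
def IsPos (z : PowerSeries ℝ) : Prop :=
  ∃ p : ℕ, (∀ k < p, coeff k z = 0) ∧ 0 < coeff p z

/-- The lexicographic order on `ℝ[[X]]`. -/
def lexLe (x y : PowerSeries ℝ) : Prop := x = y ∨ IsPos (y - x)

/-- Strict lexicographic order. -/
def lexLt (x y : PowerSeries ℝ) : Prop := IsPos (y - x)

/-- Absolute value for the lexicographic order. -/
noncomputable def pabs (x : PowerSeries ℝ) : PowerSeries ℝ :=
  if lexLe 0 x then x else -x

/-- `a ≪ b` : `k·|a| < |b|` for all naturals `k`. -/
def muchLt (a b : PowerSeries ℝ) : Prop :=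
  ∀ k : ℕ, lexLt ((k : PowerSeries ℝ) * pabs a) (pabs b)

/-- `F` is NS*-continuous: for no `x₁, x₂` does `|x₂ − x₁| ≪ |F x₂ − F x₁|` hold. -/
def NSStarContinuous (F : PowerSeries ℝ → PowerSeries ℝ) : Prop :=
  ∀ x₁ x₂ : PowerSeries ℝ, ¬ muchLt (x₂ - x₁) (F x₂ - F x₁)

/-- `F` is continuous at `x₀` for the order topology (ε-η form). -/
def OrderContinuousAt (F : PowerSeries ℝ → PowerSeries ℝ) (x₀ : PowerSeries ℝ) : Prop :=
  ∀ ε : PowerSeries ℝ, lexLt 0 ε → ∃ η : PowerSeries ℝ, lexLt 0 η ∧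
    ∀ x : PowerSeries ℝ, lexLt (pabs (x - x₀)) η → lexLt (pabs (F x - F x₀)) ε

/-
`ℝ[[X]]` is non-archimedean: if `ε > 0` has its first nonzero coefficient at index `p`, then every
`w` with `|w| < X ^ (p + 1)` has vanishing coefficients up to index `p`, and so has `k * w` for every
natural `k`; hence `k * |w| < ε` for all `k`. NS*-continuity at `x₀, x` provides some `k` with
`|F x - F x₀| ≤ k * |x - x₀|`, so `η = X ^ (p + 1)` works.
-/

lemma exists_coeff_ne_zero_forall_lt_coeff_eq_zero {z : PowerSeries ℝ} (hz : z ≠ 0) :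
    ∃ p : ℕ, (∀ k < p, coeff k z = 0) ∧ coeff p z ≠ 0 :=
  ⟨z.order.toNat, fun k hk => coeff_of_lt_order_toNat k hk, coeff_order hz⟩

lemma isPos_iff_coeff_pos {z : PowerSeries ℝ} {p : ℕ} (hlow : ∀ k < p, coeff k z = 0)
    (hp : coeff p z ≠ 0) : IsPos z ↔ 0 < coeff p z := by
  refine ⟨fun ⟨q, hq, hq'⟩ => ?_, fun h => ⟨p, hlow, h⟩⟩
  rcases lt_trichotomy q p with h | rfl | h
  · exact absurd (hlow q h) hq'.ne'
  · exact hq'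
  · exact absurd (hq p h) hp

lemma isPos_or_isPos_neg {z : PowerSeries ℝ} (hz : z ≠ 0) : IsPos z ∨ IsPos (-z) := by
  obtain ⟨p, hlow, hp⟩ := exists_coeff_ne_zero_forall_lt_coeff_eq_zero hz
  rcases hp.lt_or_gt with h | h
  · exact Or.inr ⟨p, fun k hk => by simp [hlow k hk], by simpa using h⟩
  · exact Or.inl ⟨p, hlow, h⟩

lemma isPos_add {a b : PowerSeries ℝ} (ha : IsPos a) (hb : IsPos b) : IsPos (a + b) := by
  obtain ⟨p, hp, hp'⟩ := ha
  obtain ⟨q, hq, hq'⟩ := hb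
  refine ⟨min p q, fun k hk => ?_, ?_⟩
  · simp [hp k (lt_of_lt_of_le hk (min_le_left _ _)), hq k (lt_of_lt_of_le hk (min_le_right _ _))]
  · rcases lt_trichotomy p q with h | rfl | h
    · simpa [min_eq_left h.le, hq p h] using hp'
    · simpa using add_pos hp' hq'
    · simpa [min_eq_right h.le, hp q h] using hq'

lemma lexLe_of_not_lexLt {x y : PowerSeries ℝ} (h : ¬ lexLt y x) : lexLe x y := by
  by_cases hxy : x = y
  · exact Or.inl hxy
  · refine Or.inr ((isPos_or_isPos_neg (sub_ne_zero.2 (Ne.symm hxy))).resolve_right ?_)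
    simpa [lexLt] using h

lemma lexLt_of_lexLe_of_lexLt {a b c : PowerSeries ℝ} (hab : lexLe a b) (hbc : lexLt b c) :
    lexLt a c := by
  rcases hab with rfl | hab
  · exact hbc
  · simpa [lexLt] using isPos_add hbc hab

lemma lexLe_zero_pabs (z : PowerSeries ℝ) : lexLe 0 (pabs z) := by
  unfold pabs
  split_ifs with h
  · exact h
  · exact lexLe_of_not_lexLt fun hz => h (Or.inr (by simpa [lexLt] using hz))

lemma coeff_eq_zero_of_lexLt {v w : PowerSeries ℝ} {n : ℕ} (hw : lexLe 0 w) (hwv : lexLt w v)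
    (hv : ∀ j < n, coeff j v = 0) : ∀ j < n, coeff j w = 0 := by
  by_cases hw0 : w = 0
  · simp [hw0]
  obtain ⟨p, hlow, hp⟩ := exists_coeff_ne_zero_forall_lt_coeff_eq_zero hw0
  by_contra! hne
  obtain ⟨j, hjn, hj⟩ := hne
  have hpn : p < n := lt_of_le_of_lt (not_lt.1 fun h => hj (hlow j h)) hjn
  have hw_pos : IsPos w := by simpa using hw.resolve_left (Ne.symm hw0)
  have hcoeff : 0 < coeff p w := (isPos_iff_coeff_pos hlow hp).1 hw_pos
  have hdiff_low : ∀ k < p, coeff k (v - w) = 0 := fun k hk => by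
    simp [hv k (hk.trans hpn), hlow k hk]
  have hdiff : coeff p (v - w) = -coeff p w := by simp [hv p hpn]
  have := (isPos_iff_coeff_pos hdiff_low (by rw [hdiff]; exact neg_ne_zero.2 hp)).1 hwv
  linarith

lemma lexLt_of_coeff_eq_zero {ε v : PowerSeries ℝ} {p : ℕ} (hlow : ∀ k < p, coeff k ε = 0)
    (hp : 0 < coeff p ε) (hv : ∀ j ≤ p, coeff j v = 0) : lexLt v ε :=
  ⟨p, fun k hk => by simp [hlow k hk, hv k hk.le], by simpa [hv p le_rfl] using hp⟩

lemma coeff_natCast_mul (k : ℕ) (w : PowerSeries ℝ) (n : ℕ) :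
    coeff n ((k : PowerSeries ℝ) * w) = k * coeff n w := by
  rw [← map_natCast (C (R := ℝ)), coeff_C_mul]

/-- every NS*-continuous function `ℝ[[X]] → ℝ[[X]]` is continuous
everywhere in the order topology. -/
theorem nsStarContinuous_orderContinuous (F : PowerSeries ℝ → PowerSeries ℝ)
    (hF : NSStarContinuous F) : ∀ x₀ : PowerSeries ℝ, OrderContinuousAt F x₀ := by
  intro x₀ ε hε
  obtain ⟨p, hlow, hp⟩ : IsPos ε := by simpa [lexLt] using hε
  have hX_low : ∀ j < p + 1, coeff j (X ^ (p + 1) : PowerSeries ℝ) = 0 := fun j hj => by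
    simp [coeff_X_pow, hj.ne]
  refine ⟨X ^ (p + 1), ⟨p + 1, by simpa using hX_low, by simp [coeff_X_pow]⟩, fun x hx => ?_⟩
  obtain ⟨k, hk⟩ := not_forall.1 (hF x₀ x)
  have hdx_low := coeff_eq_zero_of_lexLt (lexLe_zero_pabs _) hx hX_low
  have hkdx : lexLt (k * pabs (x - x₀)) ε := lexLt_of_coeff_eq_zero hlow hp fun j hj => by
    rw [coeff_natCast_mul, hdx_low j (Nat.lt_succ_of_le hj), mul_zero]
  exact lexLt_of_lexLe_of_lexLt (lexLe_of_not_lexLt hk) hkdx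
end

section
/- In the lexicographically ordered ring ℝ[[X]], every Cauchy sequence converges: if (u_n) satisfies that for every ε > 0 in ℝ[[X]] there is N with |u_p − u_q| < ε for all p, q ≥ N, then there exists l ∈ ℝ[[X]] with u_n → l in the order topology. -/
open PowerSeries

attribute [local instance] Classical.propDecidable

/-!
The order topology of the lexicographic order on `ℝ[[X]]` is the `X`-adic topology: `|z| < X ^ n`
forces `X ^ n ∣ z`, and every `ε > 0` dominates `|z|` as soon as `X ^ (p + 1) ∣ z`, where `p` is
the index of the leading coefficient of `ε`. A Cauchy sequence therefore has, for each `n`, its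
first `n` coefficients eventually constant, and the series of these eventual coefficients is its
limit.
-/

lemma pabs_eq_or_eq_neg (z : PowerSeries ℝ) : pabs z = z ∨ pabs z = -z := by
  unfold pabs
  split_ifs
  exacts [Or.inl rfl, Or.inr rfl]

lemma X_pow_dvd_pabs_iff {n : ℕ} {z : PowerSeries ℝ} : X ^ n ∣ pabs z ↔ X ^ n ∣ z := by
  rcases pabs_eq_or_eq_neg z with h | h <;> rw [h]
  exact dvd_neg

lemma coeff_pabs_nonneg_of_X_pow_dvd {p : ℕ} {z : PowerSeries ℝ} (h : X ^ p ∣ pabs z) :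
    0 ≤ coeff p (pabs z) := by
  have hlow := X_pow_dvd_iff.mp h
  unfold pabs at hlow ⊢
  split_ifs at hlow ⊢ with hz
  · rcases hz with rfl | ⟨q, hq0, hq⟩
    · simp
    rw [sub_zero] at hq0 hq
    rcases lt_trichotomy p q with hpq | rfl | hqp
    · exact (hq0 p hpq).ge
    · exact hq.le
    · exact absurd (hlow q hqp) hq.ne'
  · by_contra! hneg
    refine hz (Or.inr ⟨p, fun k hk => ?_, ?_⟩)
    · simpa using hlow k hk
    · simpa using hneg

lemma zero_lexLt_X_pow (n : ℕ) : lexLt 0 (X ^ n : PowerSeries ℝ) :=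
  ⟨n, fun k hk => by simp [coeff_X_pow, hk.ne], by simp⟩

lemma X_pow_dvd_of_pabs_lexLt_X_pow {n : ℕ} {z : PowerSeries ℝ} (h : lexLt (pabs z) (X ^ n)) :
    X ^ n ∣ z := by
  obtain ⟨p, hp0, hp⟩ := h
  have hlow : ∀ k < p, k ≠ n → coeff k (pabs z) = 0 := fun k hk hkn => by
    simpa [coeff_X_pow, hkn] using hp0 k hk
  rw [← X_pow_dvd_pabs_iff, X_pow_dvd_iff]
  by_cases hpn : p < n
  · have hnonneg := coeff_pabs_nonneg_of_X_pow_dvd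
      (X_pow_dvd_iff.mpr fun k hk => hlow k hk (by omega))
    have hneg : coeff p (pabs z) < 0 := by simpa [coeff_X_pow, hpn.ne] using hp
    linarith
  · exact fun k hk => hlow k (by omega) hk.ne

lemma exists_X_pow_dvd_imp_pabs_lexLt {ε : PowerSeries ℝ} (hε : lexLt 0 ε) :
    ∃ n, ∀ z : PowerSeries ℝ, X ^ n ∣ z → lexLt (pabs z) ε := by
  obtain ⟨p, hp0, hp⟩ := hε
  refine ⟨p + 1, fun z hz => ?_⟩
  have hlow := X_pow_dvd_iff.mp (X_pow_dvd_pabs_iff.mpr hz)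
  exact ⟨p, fun k hk => by simpa [hlow k (by omega)] using hp0 k hk,
    by simpa [hlow p (by omega)] using hp⟩

section Limit

variable {R : Type*} [Ring R]

lemma coeff_eq_of_X_pow_dvd_sub {n k : ℕ} {a b : PowerSeries R} (h : X ^ n ∣ a - b)
    (hk : k < n) : coeff k a = coeff k b :=
  sub_eq_zero.mp (by simpa using X_pow_dvd_iff.mp h k hk)

lemma exists_limit_of_X_pow_dvd_sub (u : ℕ → PowerSeries R) (N : ℕ → ℕ)
    (hN : ∀ n p q, N n ≤ p → N n ≤ q → X ^ n ∣ u p - u q) :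
    ∃ l : PowerSeries R, ∀ n p, N n ≤ p → X ^ n ∣ u p - l := by
  refine ⟨mk fun k => coeff k (u (N (k + 1))), fun n p hp => X_pow_dvd_iff.mpr fun k hk => ?_⟩
  have hp_max : coeff k (u p) = coeff k (u (max p (N (k + 1)))) :=
    coeff_eq_of_X_pow_dvd_sub (hN n _ _ hp (hp.trans (le_max_left _ _))) hk
  have hmax_N : coeff k (u (max p (N (k + 1)))) = coeff k (u (N (k + 1))) :=
    coeff_eq_of_X_pow_dvd_sub (hN (k + 1) _ _ (le_max_right _ _) le_rfl) k.lt_succ_self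
  simp [hp_max, hmax_N]

end Limit

/-- every Cauchy sequence in the lexicographically ordered ring `ℝ[[X]]`
converges in the order topology. -/
theorem powerSeries_cauchy_complete (u : ℕ → PowerSeries ℝ)
    (hC : ∀ ε : PowerSeries ℝ, lexLt 0 ε →
      ∃ N : ℕ, ∀ p q : ℕ, N ≤ p → N ≤ q → lexLt (pabs (u p - u q)) ε) :
    ∃ l : PowerSeries ℝ, ∀ ε : PowerSeries ℝ, lexLt 0 ε →
      ∃ N : ℕ, ∀ p : ℕ, N ≤ p → lexLt (pabs (u p - l)) ε := by
  choose N hN using fun n => hC (X ^ n) (zero_lexLt_X_pow n)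
  obtain ⟨l, hl⟩ := exists_limit_of_X_pow_dvd_sub u N fun n p q hp hq =>
    X_pow_dvd_of_pabs_lexLt_X_pow (hN n p q hp hq)
  refine ⟨l, fun ε hε => ?_⟩
  obtain ⟨n, hn⟩ := exists_X_pow_dvd_imp_pabs_lexLt hε
  exact ⟨N n, fun p hp => hn _ (hl n p hp)⟩
end
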